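/- arXiv:2404.09639 — 3 statements merged into one kernel-verified Lean document; each statement's English description precedes it below -/
import Mathlib

section
/- Let X, Y be random variables on 𝔽₂ⁿ, let X₁, X₂ be independent copies of X and Y₁, Y₂ independent copies of Y, with X₁, X₂, Y₁, Y₂ mutually independent. Set T = X₁+Y₁, T̄ = X₂+Y₂, V = X₁+Y₂, V̄ = X₂+Y₁, W = X₁+X₂, W̄ = Y₁+Y₂, S = X₁+X₂+Y₁+Y₂, I₁ = I(T : V | S), I₂ = I(T : W | S). Then d[(T;V) | (W̄,S)] + d[(V;W) | (T̄,S)] + d[(W;T) | (V̄,S)] ≤ 3·I₁ + 6·I₂. -/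
open scoped BigOperators Pointwise Classical

noncomputable section

/-- `𝔽₂ⁿ`, the `n`-dimensional vector space over the field with two elements. -/
abbrev F2 (n : ℕ) : Type := Fin n → ZMod 2

/-- `f` is a probability distribution on the finite type `α`. -/
def IsDist {α : Type*} [Fintype α] (f : α → ℝ) : Prop :=
  (∀ x, 0 ≤ f x) ∧ ∑ x, f x = 1

/-- Shannon entropy (base 2) of a distribution on a finite type. -/
def ent {α : Type*} [Fintype α] (f : α → ℝ) : ℝ :=
  ∑ x, -(f x * Real.logb 2 (f x))

/-- Distribution of `X + Y` for independent `X ∼ f`, `Y ∼ g`. -/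
def addDist {α : Type*} [Fintype α] [AddGroup α] (f g : α → ℝ) : α → ℝ :=
  fun s => ∑ x, f x * g (s - x)

/-- Distribution of `X - Y` for independent `X ∼ f`, `Y ∼ g`. -/
def subDist {α : Type*} [Fintype α] [AddGroup α] (f g : α → ℝ) : α → ℝ :=
  fun s => ∑ x, f x * g (x - s)

/-- Entropic Ruzsa distance `d[X;Y] = H(X' + Y') - (H(X) + H(Y))/2` (in `𝔽₂ⁿ`
addition coincides with subtraction). -/
def rdist {α : Type*} [Fintype α] [AddGroup α] (f g : α → ℝ) : ℝ :=
  ent (addDist f g) - (ent f + ent g) / 2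

/-- Entropic Ruzsa distance `d[X;Y] = H(X' - Y') - (H(X) + H(Y))/2` in a general group. -/
def rdistSub {α : Type*} [Fintype α] [AddGroup α] (f g : α → ℝ) : ℝ :=
  ent (subDist f g) - (ent f + ent g) / 2

/-- Pushforward of a distribution along a map. -/
def pmap {α β : Type*} [Fintype α] (h : α → β) (π : α → ℝ) : β → ℝ :=
  fun b => ∑ a, if h a = b then π a else 0

/-- First marginal of a joint distribution. -/
def margFst {α γ : Type*} [Fintype γ] (π : α × γ → ℝ) : α → ℝ :=
  fun a => ∑ z, π (a, z)

/-- Second marginal of a joint distribution. -/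
def margSnd {α γ : Type*} [Fintype α] (π : α × γ → ℝ) : γ → ℝ :=
  fun z => ∑ a, π (a, z)

/-- Conditional distribution of the first coordinate given that the second equals `z`. -/
def condDist {α γ : Type*} [Fintype α] (π : α × γ → ℝ) (z : γ) : α → ℝ :=
  fun a => π (a, z) / margSnd π z

/-- Conditional entropy `H(X | Z) = E_{z ∼ Z} H(X |_{Z = z})`. -/
def condEnt {α γ : Type*} [Fintype α] [Fintype γ] (π : α × γ → ℝ) : ℝ :=
  ∑ z, margSnd π z * ent (condDist π z)

/-- Mutual information `I(X : Y) = H(X) + H(Y) - H(X, Y)`. -/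
def mutInfo {α β : Type*} [Fintype α] [Fintype β] (π : α × β → ℝ) : ℝ :=
  ent (margFst π) + ent (margSnd π) - ent π

/-- Conditional mutual information `I(X : Y | Z) = E_{z ∼ Z} I(X|_{Z=z} : Y|_{Z=z})`. -/
def condMutInfo {α β γ : Type*} [Fintype α] [Fintype β] [Fintype γ]
    (π : (α × β) × γ → ℝ) : ℝ :=
  ∑ z, margSnd π z * mutInfo (condDist π z)

/-- Conditioned Ruzsa distance `d[(X;Y) | Z] = E_{z ∼ Z} d[X|_{Z=z} ; Y|_{Z=z}]`, where
inside the expectation the two conditioned variables are treated as independent. -/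
def condRdist {α γ : Type*} [Fintype α] [Fintype γ] [AddGroup α]
    (π : (α × α) × γ → ℝ) : ℝ :=
  ∑ z, margSnd π z * rdist (pmap Prod.fst (condDist π z)) (pmap Prod.snd (condDist π z))

/-- Doubly conditioned Ruzsa distance `d[X | Z ; Y | W] = E_{z,w} d[X|_{Z=z} ; Y|_{W=w}]`
for `(X,Z)` independent of `(Y,W)`. -/
def condRdist2 {α γ δ : Type*} [Fintype α] [Fintype γ] [Fintype δ] [AddGroup α]
    (π : α × γ → ℝ) (ρ : α × δ → ℝ) : ℝ :=
  ∑ z, ∑ w, margSnd π z * margSnd ρ w * rdist (condDist π z) (condDist ρ w)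

/-- The uniform distribution on a finite set `A`. -/
def unifFin {α : Type*} [Fintype α] (A : Finset α) : α → ℝ :=
  fun x => if x ∈ A then (A.card : ℝ)⁻¹ else 0

/-- The uniform distribution on a set `S`. -/
def unifSet {α : Type*} [Fintype α] (S : Set α) : α → ℝ :=
  fun x => if x ∈ S then (Nat.card S : ℝ)⁻¹ else 0

/-- Kullback–Leibler divergence (base-2 logarithm), with value `⊤` if the support of `f`
is not contained in the support of `g`. -/
def KL {α : Type*} [Fintype α] (f g : α → ℝ) : EReal :=
  if ∀ x, g x = 0 → f x = 0 then
    ((∑ x, f x * Real.logb 2 (f x / g x) : ℝ) : EReal)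
  else ⊤

/-- `τ⁻(X) := inf_T D_KL(X ‖ U_A + T)`, the infimum over all `𝔽₂ⁿ`-valued random
variables `T` independent of `U_A`. -/
def tauMinus {n : ℕ} (A : Finset (F2 n)) (f : F2 n → ℝ) : EReal :=
  ⨅ t : {t : F2 n → ℝ // IsDist t}, KL f (addDist (unifFin A) t.1)

/-- `τ⁺(X) := τ⁻(X) + H(X) - H(U_A)`. -/
def tauPlus {n : ℕ} (A : Finset (F2 n)) (f : F2 n → ℝ) : EReal :=
  tauMinus A f + ((ent f - ent (unifFin A) : ℝ) : EReal)

/-- The sample space for `(X₁, X₂, Y₁, Y₂)`. -/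
abbrev Quad (n : ℕ) : Type := (F2 n × F2 n) × (F2 n × F2 n)

/-- Joint distribution of `(X₁, X₂, Y₁, Y₂)` where `X₁, X₂ ∼ f` and `Y₁, Y₂ ∼ g`
are mutually independent. -/
def jointXY {n : ℕ} (f g : F2 n → ℝ) : Quad n → ℝ :=
  fun q => f q.1.1 * f q.1.2 * g q.2.1 * g q.2.2

/-- `T = X₁ + Y₁`. -/
def Tv {n : ℕ} (q : Quad n) : F2 n := q.1.1 + q.2.1
/-- `T̄ = X₂ + Y₂`. -/
def Tb {n : ℕ} (q : Quad n) : F2 n := q.1.2 + q.2.2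
/-- `V = X₁ + Y₂`. -/
def Vv {n : ℕ} (q : Quad n) : F2 n := q.1.1 + q.2.2
/-- `V̄ = X₂ + Y₁`. -/
def Vb {n : ℕ} (q : Quad n) : F2 n := q.1.2 + q.2.1
/-- `W = X₁ + X₂`. -/
def Wv {n : ℕ} (q : Quad n) : F2 n := q.1.1 + q.1.2
/-- `W̄ = Y₁ + Y₂`. -/
def Wb {n : ℕ} (q : Quad n) : F2 n := q.2.1 + q.2.2
/-- `S = X₁ + X₂ + Y₁ + Y₂`. -/
def Sv {n : ℕ} (q : Quad n) : F2 n := q.1.1 + q.1.2 + q.2.1 + q.2.2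

/-- `I₁ = I(T : V | S)`. -/
def I1 {n : ℕ} (f g : F2 n → ℝ) : ℝ :=
  condMutInfo (pmap (fun q : Quad n => ((Tv q, Vv q), Sv q)) (jointXY f g))

/-- `I₂ = I(T : W | S)`. -/
def I2 {n : ℕ} (f g : F2 n → ℝ) : ℝ :=
  condMutInfo (pmap (fun q : Quad n => ((Tv q, Wv q), Sv q)) (jointXY f g))

/-!
Each distance is bounded by the conditional entropic Balog–Szemerédi–Gowers inequality
`d[(A;B) | (A+B, C)] ≤ 3 I(A:B | C) + 2 H(A+B | C) - H(A | C) - H(B | C)`, valid in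
characteristic 2, applied to `(T,V,S)`, `(V,W,S)` and `(W,T,S)`. In `𝔽₂ⁿ` we have
`T + V = W̄ = W + S`, `V + W = T̄ = T + S` and `W + T = V̄ = V + S`, so the three terms
`H(A+B | S)` are `H(W | S)`, `H(T | S)`, `H(V | S)` and cancel against the terms
`-H(A | S) - H(B | S)`. Finally `I(V:W | S) = I(T:W | S)` by the symmetry `Y₁ ↔ Y₂`, and
`I(W:T | S) = I(T:W | S)`.

For the inequality, let `(A₁,B₁,C₁)` and `(A₂,B₂,C₂)` be copies of `(A,B,C)` that are
conditionally independent given `Z = (A+B, C)`. Then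
`d[(A;B) | Z] = H(A₁+B₂ | Z) - (H(A | Z) + H(B | Z))/2` and `H(A₁+B₂ | Z) ≤ H(A₁+B₂ | C)`.
As `A₁ + B₂ = A₂ + B₁` in characteristic 2, submodularity gives
`H(A₁+B₂, C) + H(A₁,B₁,A₂,B₂,C) ≤ H(A₁,B₂,C) + H(A₂,B₁,C)`, and the last two terms are
bounded by subadditivity given `C`.
-/

section Pushforward

variable {Ω α β : Type*} [Fintype Ω] [Fintype α]

lemma sum_pmap_mul (h : Ω → α) (μ : Ω → ℝ) (G : α → ℝ) :
    ∑ a, pmap h μ a * G a = ∑ ω, μ ω * G (h ω) := by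
  simp only [pmap, Finset.sum_mul, ite_mul, zero_mul]
  rw [Finset.sum_comm]
  simp

lemma pmap_nonneg {μ : Ω → ℝ} (hμ : ∀ ω, 0 ≤ μ ω) (h : Ω → β) (b : β) : 0 ≤ pmap h μ b :=
  Finset.sum_nonneg fun ω _ => by split_ifs <;> simp [hμ ω]

lemma le_pmap_apply {μ : Ω → ℝ} (hμ : ∀ ω, 0 ≤ μ ω) (h : Ω → β) (ω : Ω) :
    μ ω ≤ pmap h μ (h ω) := by
  have := Finset.single_le_sum (f := fun ω' => if h ω' = h ω then μ ω' else 0)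
    (fun ω' _ => by split_ifs <;> simp [hμ ω']) (Finset.mem_univ ω)
  simpa [pmap] using this

lemma pmap_pos {μ : Ω → ℝ} (hμ : ∀ ω, 0 ≤ μ ω) (h : Ω → β) {ω : Ω} (hω : μ ω ≠ 0) :
    0 < pmap h μ (h ω) :=
  ((hμ ω).lt_of_ne' hω).trans_le (le_pmap_apply hμ h ω)

lemma pmap_pmap (h : α → β) (h' : Ω → α) (μ : Ω → ℝ) :
    pmap h (pmap h' μ) = pmap (fun ω => h (h' ω)) μ := by
  funext b
  have := sum_pmap_mul h' μ (fun a => if h a = b then 1 else 0)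
  simpa [pmap] using this

lemma pmap_congr {μ : Ω → ℝ} {h h' : Ω → β} (hh : ∀ ω, μ ω ≠ 0 → h ω = h' ω) :
    pmap h μ = pmap h' μ := by
  funext b
  refine Finset.sum_congr rfl fun ω _ => ?_
  by_cases hω : μ ω = 0
  · simp [hω]
  · rw [hh ω hω]

lemma pmap_comp_equiv {μ : Ω → ℝ} (e : Ω ≃ Ω) (he : ∀ ω, μ (e ω) = μ ω) (h : Ω → β) :
    pmap (fun ω => h (e ω)) μ = pmap h μ := by
  funext b
  rw [pmap, pmap, ← Equiv.sum_comp e (fun ω => if h ω = b then μ ω else 0)]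
  simp only [he]

lemma pmap_snd_apply [Fintype β] (ρ : α × β → ℝ) (b : β) :
    pmap Prod.snd ρ b = ∑ a, ρ (a, b) := by
  rw [pmap, Fintype.sum_prod_type_right, Finset.sum_eq_single b] <;> simp_all

lemma margSnd_eq_pmap [Fintype β] (ρ : α × β → ℝ) : margSnd ρ = pmap Prod.snd ρ :=
  funext fun b => (pmap_snd_apply ρ b).symm

lemma margFst_eq_pmap [Fintype β] (ρ : α × β → ℝ) : margFst ρ = pmap Prod.fst ρ := by
  funext a
  rw [pmap, Fintype.sum_prod_type, Finset.sum_eq_single a] <;> simp_all [margFst]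

end Pushforward

section Entropy

variable {Ω α : Type*} [Fintype Ω] [Fintype α]

lemma ent_eq_neg_sum (f : α → ℝ) : ent f = -∑ a, f a * Real.logb 2 (f a) := by
  simp [ent]

lemma sum_pmap (h : Ω → α) (μ : Ω → ℝ) : ∑ a, pmap h μ a = ∑ ω, μ ω := by
  simpa using sum_pmap_mul h μ (fun _ => 1)

lemma ent_pmap_eq_neg_sum (h : Ω → α) (μ : Ω → ℝ) :
    ent (pmap h μ) = -∑ ω, μ ω * Real.logb 2 (pmap h μ (h ω)) := by
  rw [ent_eq_neg_sum, sum_pmap_mul h μ (fun a => Real.logb 2 (pmap h μ a))]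

lemma ent_pmap_of_injective {h : Ω → α} (hh : Function.Injective h) (μ : Ω → ℝ) :
    ent (pmap h μ) = ent μ := by
  have hμ : ∀ ω, pmap h μ (h ω) = μ ω := fun ω => by
    rw [pmap, Finset.sum_eq_single ω] <;> simp_all [hh.eq_iff]
  rw [ent_pmap_eq_neg_sum, ent_eq_neg_sum]
  simp only [hμ]

lemma ent_le_neg_sum_mul_logb {f g : α → ℝ} (hf : ∀ a, 0 ≤ f a) (hg : ∀ a, 0 ≤ g a)
    (hfg : ∀ a, f a ≠ 0 → g a ≠ 0) (hsum : ∑ a, g a ≤ ∑ a, f a) :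
    ent f ≤ -∑ a, f a * Real.logb 2 (g a) := by
  have hlog2 : 0 < Real.log 2 := Real.log_pos one_lt_two
  have key : ∀ a,
      f a * Real.logb 2 (g a) - f a * Real.logb 2 (f a) ≤ (g a - f a) / Real.log 2 := by
    intro a
    rcases (hf a).eq_or_lt' with hfa | hfa
    · simpa [hfa] using div_nonneg (hg a) hlog2.le
    have hga : 0 < g a := (hg a).lt_of_ne' (hfg a hfa.ne')
    have hlog := Real.log_le_sub_one_of_pos (div_pos hga hfa)
    rw [← mul_sub, ← Real.logb_div hga.ne' hfa.ne', Real.logb, mul_div_assoc',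
      div_le_div_iff_of_pos_right hlog2]
    calc f a * Real.log (g a / f a) ≤ f a * (g a / f a - 1) :=
          mul_le_mul_of_nonneg_left hlog hfa.le
      _ = g a - f a := by field_simp
  have hsum_key := Finset.sum_le_sum fun a (_ : a ∈ Finset.univ) => key a
  rw [Finset.sum_sub_distrib, ← Finset.sum_div, Finset.sum_sub_distrib] at hsum_key
  have hrhs : (∑ a, g a - ∑ a, f a) / Real.log 2 ≤ 0 :=
    div_nonpos_of_nonpos_of_nonneg (by linarith) hlog2.le
  rw [ent_eq_neg_sum]
  linarith

end Entropy

section Submodularity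

variable {Ω α β γ : Type*} [Fintype Ω] [Fintype α] [Fintype β] [Fintype γ]
  {μ : Ω → ℝ}

lemma sum_pmap_pair_left (X : Ω → α) (Z : Ω → γ) (z : γ) :
    ∑ x, pmap (fun ω => (X ω, Z ω)) μ (x, z) = pmap Z μ z := by
  rw [← pmap_snd_apply, pmap_pmap]

lemma ent_triple_add_ent_le (hμ : ∀ ω, 0 ≤ μ ω) (X : Ω → α) (Y : Ω → β) (Z : Ω → γ) :
    ent (pmap (fun ω => ((X ω, Y ω), Z ω)) μ) + ent (pmap Z μ)
      ≤ ent (pmap (fun ω => (X ω, Z ω)) μ) + ent (pmap (fun ω => (Y ω, Z ω)) μ) := by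
  set pXZ := pmap (fun ω => (X ω, Z ω)) μ
  set pYZ := pmap (fun ω => (Y ω, Z ω)) μ
  set pZ := pmap Z μ
  -- the law of `X` and `Y` made conditionally independent given `Z`
  let g : (α × β) × γ → ℝ := fun q => pXZ (q.1.1, q.2) * pYZ (q.1.2, q.2) / pZ q.2
  have hg : ∀ q, 0 ≤ g q := fun q =>
    div_nonneg (mul_nonneg (pmap_nonneg hμ _ _) (pmap_nonneg hμ _ _)) (pmap_nonneg hμ _ _)
  have hgω : ∀ ω, μ ω ≠ 0 → 0 < g ((X ω, Y ω), Z ω) := fun ω hω =>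
    div_pos (mul_pos (pmap_pos hμ _ hω) (pmap_pos hμ _ hω)) (pmap_pos hμ _ hω)
  have hsupp : ∀ q, pmap (fun ω => ((X ω, Y ω), Z ω)) μ q ≠ 0 → g q ≠ 0 := by
    intro q hq
    obtain ⟨ω, -, hω⟩ := Finset.exists_ne_zero_of_sum_ne_zero hq
    split_ifs at hω with hωq
    · exact hωq ▸ (hgω ω hω).ne'
    · exact (hω rfl).elim
  have hsum : ∑ q, g q = ∑ q, pmap (fun ω => ((X ω, Y ω), Z ω)) μ q := by
    calc ∑ q, g q = ∑ z, (∑ x, pXZ (x, z)) * (∑ y, pYZ (y, z)) / pZ z := by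
          simp only [g, Fintype.sum_prod_type, Finset.sum_mul_sum, Finset.sum_div]
          conv_lhs => arg 2; ext x; rw [Finset.sum_comm]
          rw [Finset.sum_comm]
      _ = ∑ z, pZ z := by simp only [pXZ, pYZ, pZ, sum_pmap_pair_left, mul_self_div_self]
      _ = _ := by rw [sum_pmap, sum_pmap]
  have hgibbs := ent_le_neg_sum_mul_logb (pmap_nonneg hμ _) hg hsupp hsum.le
  rw [sum_pmap_mul] at hgibbs
  have hsplit : ∀ ω, μ ω * Real.logb 2 (g ((X ω, Y ω), Z ω))
      = μ ω * Real.logb 2 (pXZ (X ω, Z ω)) + μ ω * Real.logb 2 (pYZ (Y ω, Z ω))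
        - μ ω * Real.logb 2 (pZ (Z ω)) := by
    intro ω
    by_cases hω : μ ω = 0
    · simp [hω]
    rw [Real.logb_div (mul_pos (pmap_pos hμ _ hω) (pmap_pos hμ _ hω)).ne' (pmap_pos hμ _ hω).ne',
      Real.logb_mul (pmap_pos hμ _ hω).ne' (pmap_pos hμ _ hω).ne']
    ring
  rw [Finset.sum_congr rfl fun ω _ => hsplit ω, Finset.sum_sub_distrib, Finset.sum_add_distrib]
    at hgibbs
  linarith [ent_pmap_eq_neg_sum (fun ω => (X ω, Z ω)) μ,
    ent_pmap_eq_neg_sum (fun ω => (Y ω, Z ω)) μ, ent_pmap_eq_neg_sum Z μ]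

lemma ent_pmap_pair_comp {X : Ω → α} {Y : Ω → β} (g : α → β)
    (hY : ∀ ω, μ ω ≠ 0 → Y ω = g (X ω)) :
    ent (pmap (fun ω => (X ω, Y ω)) μ) = ent (pmap X μ) := by
  rw [pmap_congr (h' := fun ω => (X ω, g (X ω))) fun ω hω => by rw [hY ω hω],
    ← pmap_pmap (fun a => (a, g a)), ent_pmap_of_injective]
  exact fun a a' h => (Prod.ext_iff.mp h).1

lemma ent_pair_add_ent_comp_le (hμ : ∀ ω, 0 ≤ μ ω) (X : Ω → α) (Y : Ω → β) (w₁ : α → γ)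
    (w₂ : β → γ) (hw : ∀ ω, μ ω ≠ 0 → w₁ (X ω) = w₂ (Y ω)) :
    ent (pmap (fun ω => (X ω, Y ω)) μ) + ent (pmap (fun ω => w₁ (X ω)) μ)
      ≤ ent (pmap X μ) + ent (pmap Y μ) := by
  have h := ent_triple_add_ent_le hμ X Y (fun ω => w₁ (X ω))
  rwa [ent_pmap_pair_comp (X := fun ω => (X ω, Y ω)) (fun p => w₁ p.1) fun _ _ => rfl,
    ent_pmap_pair_comp (X := X) w₁ fun _ _ => rfl, ent_pmap_pair_comp w₂ hw] at h

lemma ent_pmap_add_pair {G : Type*} [AddGroup G] [Fintype G] (X Y : Ω → G) :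
    ent (pmap (fun ω => (X ω + Y ω, Y ω)) μ) = ent (pmap (fun ω => (X ω, Y ω)) μ) := by
  have hshear : Function.Injective fun p : G × G => (p.1 + p.2, p.2) := by
    rintro ⟨x, y⟩ ⟨x', y'⟩ h
    obtain ⟨h, rfl : y = y'⟩ := Prod.mk.inj h
    exact Prod.ext (add_right_cancel h) rfl
  simpa only [pmap_pmap] using ent_pmap_of_injective hshear (pmap (fun ω => (X ω, Y ω)) μ)

end Submodularity

section Conditioning

variable {Ω α β γ : Type*} [Fintype Ω] [Fintype α] [Fintype β] [Fintype γ]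

/-- `μ` conditioned on `Z = z`; identically zero when `pmap Z μ z = 0`. -/
def condOn (μ : Ω → ℝ) (Z : Ω → γ) (z : γ) : Ω → ℝ :=
  fun ω => if Z ω = z then μ ω / pmap Z μ z else 0

lemma margSnd_pmap (μ : Ω → ℝ) (F : Ω → α) (Z : Ω → γ) :
    margSnd (pmap (fun ω => (F ω, Z ω)) μ) = pmap Z μ := by
  rw [margSnd_eq_pmap, pmap_pmap]

lemma condDist_pmap (μ : Ω → ℝ) (F : Ω → α) (Z : Ω → γ) (z : γ) :
    condDist (pmap (fun ω => (F ω, Z ω)) μ) z = pmap F (condOn μ Z z) := by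
  funext a
  rw [condDist, margSnd_pmap, pmap, pmap, Finset.sum_div]
  refine Finset.sum_congr rfl fun ω _ => ?_
  by_cases hF : F ω = a <;> by_cases hZ : Z ω = z <;> simp [condOn, pmap, hF, hZ]

lemma condEnt_eq {ρ : α × γ → ℝ} (hρ : ∀ p, 0 ≤ ρ p) :
    condEnt ρ = ent ρ - ent (margSnd ρ) := by
  have key : ∀ a z, margSnd ρ z * -(condDist ρ z a * Real.logb 2 (condDist ρ z a))
      = -(ρ (a, z) * Real.logb 2 (ρ (a, z))) + ρ (a, z) * Real.logb 2 (margSnd ρ z) := by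
    intro a z
    rcases (hρ (a, z)).eq_or_lt' with h | h
    · simp [condDist, h]
    have hm : 0 < margSnd ρ z :=
      h.trans_le (Finset.single_le_sum (fun a' _ => hρ (a', z)) (Finset.mem_univ a))
    rw [condDist, Real.logb_div h.ne' hm.ne']
    field_simp
    ring
  simp only [condEnt, ent, Finset.mul_sum, key, Finset.sum_add_distrib, ← Finset.sum_mul]
  rw [Fintype.sum_prod_type_right]
  simp only [margSnd, Finset.sum_neg_distrib]
  ring

lemma condEnt_pmap {μ : Ω → ℝ} (hμ : ∀ ω, 0 ≤ μ ω) (F : Ω → α) (Z : Ω → γ) :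
    condEnt (pmap (fun ω => (F ω, Z ω)) μ)
      = ent (pmap (fun ω => (F ω, Z ω)) μ) - ent (pmap Z μ) := by
  rw [condEnt_eq (pmap_nonneg hμ _), margSnd_pmap]

lemma condEnt_pmap_eq_sum (μ : Ω → ℝ) (F : Ω → α) (Z : Ω → γ) :
    condEnt (pmap (fun ω => (F ω, Z ω)) μ)
      = ∑ z, pmap Z μ z * ent (pmap F (condOn μ Z z)) := by
  simp only [condEnt, margSnd_pmap, condDist_pmap]

lemma condEnt_pmap_le_comp {μ : Ω → ℝ} (hμ : ∀ ω, 0 ≤ μ ω) (X : Ω → α) (Z : Ω → β)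
    (c : β → γ) :
    condEnt (pmap (fun ω => (X ω, Z ω)) μ) ≤ condEnt (pmap (fun ω => (X ω, c (Z ω))) μ) := by
  have h := ent_triple_add_ent_le hμ X Z (fun ω => c (Z ω))
  rw [ent_pmap_pair_comp (X := fun ω => (X ω, Z ω)) (fun p => c p.2) fun _ _ => rfl,
    ent_pmap_pair_comp (X := Z) c fun _ _ => rfl] at h
  rw [condEnt_pmap hμ, condEnt_pmap hμ]
  linarith

lemma condMutInfo_pmap {μ : Ω → ℝ} (hμ : ∀ ω, 0 ≤ μ ω) (A : Ω → α) (B : Ω → β) (C : Ω → γ) :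
    condMutInfo (pmap (fun ω => ((A ω, B ω), C ω)) μ)
      = ent (pmap (fun ω => (A ω, C ω)) μ) + ent (pmap (fun ω => (B ω, C ω)) μ)
        - ent (pmap (fun ω => ((A ω, B ω), C ω)) μ) - ent (pmap C μ) := by
  rw [condMutInfo, margSnd_pmap]
  simp only [mutInfo, condDist_pmap, margFst_eq_pmap, margSnd_eq_pmap, pmap_pmap, mul_sub, mul_add,
    Finset.sum_add_distrib, Finset.sum_sub_distrib]
  rw [← condEnt_pmap_eq_sum, ← condEnt_pmap_eq_sum,
    ← condEnt_pmap_eq_sum (F := fun ω => (A ω, B ω)), condEnt_pmap hμ, condEnt_pmap hμ,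
    condEnt_pmap hμ]
  ring

lemma condMutInfo_pmap_comm {μ : Ω → ℝ} (hμ : ∀ ω, 0 ≤ μ ω) (A : Ω → α) (B : Ω → β)
    (C : Ω → γ) :
    condMutInfo (pmap (fun ω => ((A ω, B ω), C ω)) μ)
      = condMutInfo (pmap (fun ω => ((B ω, A ω), C ω)) μ) := by
  have hswap : Function.Injective fun p : (α × β) × γ => ((p.1.2, p.1.1), p.2) := by
    rintro ⟨⟨a, b⟩, c⟩ ⟨⟨a', b'⟩, c'⟩ h
    simp_all
  have h := ent_pmap_of_injective hswap (pmap (fun ω => ((A ω, B ω), C ω)) μ)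
  rw [pmap_pmap] at h
  rw [condMutInfo_pmap hμ, condMutInfo_pmap hμ, h]
  ring

end Conditioning

section CondIndepCopies

variable {Ω α γ : Type*} [Fintype Ω] {μ : Ω → ℝ}

def condIndepCopies (μ : Ω → ℝ) (Z : Ω → γ) : Ω × Ω → ℝ :=
  fun q => μ q.1 * condOn μ Z (Z q.1) q.2

lemma condIndepCopies_nonneg (hμ : ∀ ω, 0 ≤ μ ω) (Z : Ω → γ) (q : Ω × Ω) :
    0 ≤ condIndepCopies μ Z q := by
  refine mul_nonneg (hμ _) ?_
  unfold condOn
  split_ifs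
  exacts [div_nonneg (hμ _) (pmap_nonneg hμ _ _), le_rfl]

lemma condIndepCopies_swap (Z : Ω → γ) (q : Ω × Ω) :
    condIndepCopies μ Z q.swap = condIndepCopies μ Z q := by
  by_cases h : Z q.1 = Z q.2
  · simp only [condIndepCopies, condOn, Prod.fst_swap, Prod.snd_swap, h, if_true]
    ring
  · simp [condIndepCopies, condOn, h, Ne.symm h]

lemma condIndepCopies_eq_zero (Z : Ω → γ) {q : Ω × Ω} (h : Z q.1 ≠ Z q.2) :
    condIndepCopies μ Z q = 0 := by
  simp [condIndepCopies, condOn, Ne.symm h]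

lemma sum_condOn (μ : Ω → ℝ) (Z : Ω → γ) (z : γ) :
    ∑ ω, condOn μ Z z ω = pmap Z μ z / pmap Z μ z := by
  rw [pmap, Finset.sum_div]
  exact Finset.sum_congr rfl fun ω _ => by split_ifs <;> simp [condOn, pmap, *]

lemma pmap_fst_condIndepCopies (hμ : ∀ ω, 0 ≤ μ ω) (Z : Ω → γ) :
    pmap Prod.fst (condIndepCopies μ Z) = μ := by
  funext ω
  rw [← margFst_eq_pmap, margFst]
  simp only [condIndepCopies, ← Finset.mul_sum, sum_condOn]
  by_cases hω : μ ω = 0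
  · simp [hω]
  · rw [div_self (pmap_pos hμ Z hω).ne', mul_one]

lemma pmap_comp_swap_condIndepCopies (Z : Ω → γ) (F : Ω × Ω → α) :
    pmap (fun q => F q.swap) (condIndepCopies μ Z) = pmap F (condIndepCopies μ Z) :=
  pmap_comp_equiv (Equiv.prodComm Ω Ω) (condIndepCopies_swap Z) F

lemma pmap_snd_condIndepCopies (hμ : ∀ ω, 0 ≤ μ ω) (Z : Ω → γ) :
    pmap Prod.snd (condIndepCopies μ Z) = μ :=
  (pmap_comp_swap_condIndepCopies Z Prod.fst).trans (pmap_fst_condIndepCopies hμ Z)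

lemma pmap_comp_fst_condIndepCopies (hμ : ∀ ω, 0 ≤ μ ω) (Z : Ω → γ) (F : Ω → α) :
    pmap (fun q => F q.1) (condIndepCopies μ Z) = pmap F μ := by
  rw [← pmap_pmap, pmap_fst_condIndepCopies hμ]

lemma pmap_comp_snd_condIndepCopies (hμ : ∀ ω, 0 ≤ μ ω) (Z : Ω → γ) (F : Ω → α) :
    pmap (fun q => F q.2) (condIndepCopies μ Z) = pmap F μ := by
  rw [← pmap_pmap, pmap_snd_condIndepCopies hμ]

lemma condOn_condIndepCopies (hμ : ∀ ω, 0 ≤ μ ω) (Z : Ω → γ) (z : γ) :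
    condOn (condIndepCopies μ Z) (fun q => Z q.1) z
      = fun q => condOn μ Z z q.1 * condOn μ Z z q.2 := by
  funext q
  rw [condOn, pmap_comp_fst_condIndepCopies hμ]
  by_cases h : Z q.1 = z
  · simp only [condIndepCopies, h, if_true, condOn]
    ring
  · simp [condOn, h]

lemma ent_condIndepCopies [Fintype γ] (hμ : ∀ ω, 0 ≤ μ ω) (Z : Ω → γ) :
    ent (condIndepCopies μ Z) = 2 * ent μ - ent (pmap Z μ) := by
  set ν := condIndepCopies μ Z
  have key : ∀ q, ν q * Real.logb 2 (ν q) = ν q * Real.logb 2 (μ q.1)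
      + ν q * Real.logb 2 (μ q.2) - ν q * Real.logb 2 (pmap Z μ (Z q.1)) := by
    intro q
    by_cases hq : ν q = 0
    · simp [hq]
    have hZ : Z q.2 = Z q.1 := by
      by_contra h
      exact hq (condIndepCopies_eq_zero Z (Ne.symm h))
    have hνq : ν q = μ q.1 * (μ q.2 / pmap Z μ (Z q.1)) := by
      simp [ν, condIndepCopies, condOn, hZ]
    rw [hνq] at hq ⊢
    have h1 : μ q.1 ≠ 0 := left_ne_zero_of_mul hq
    have h2 : μ q.2 ≠ 0 := left_ne_zero_of_mul (right_ne_zero_of_mul hq)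
    rw [Real.logb_mul h1 (right_ne_zero_of_mul hq), Real.logb_div h2 (pmap_pos hμ Z h1).ne']
    ring
  have h1 := sum_pmap_mul Prod.fst ν (fun ω => Real.logb 2 (μ ω))
  have h2 := sum_pmap_mul Prod.snd ν (fun ω => Real.logb 2 (μ ω))
  have h3 := sum_pmap_mul Prod.fst ν (fun ω => Real.logb 2 (pmap Z μ (Z ω)))
  rw [pmap_fst_condIndepCopies hμ] at h1 h3
  rw [pmap_snd_condIndepCopies hμ] at h2
  rw [ent_eq_neg_sum, Finset.sum_congr rfl fun q _ => key q, Finset.sum_sub_distrib,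
    Finset.sum_add_distrib, ← h1, ← h2, ← h3, ent_eq_neg_sum, ent_pmap_eq_neg_sum]
  ring

end CondIndepCopies

section RuzsaDistance

variable {Ω Ω' G γ : Type*} [Fintype Ω] [Fintype Ω'] [Fintype G] [Fintype γ] [AddCommGroup G]

lemma addDist_pmap (ρ : Ω → ℝ) (ρ' : Ω' → ℝ) (A : Ω → G) (B : Ω' → G) :
    addDist (pmap A ρ) (pmap B ρ')
      = pmap (fun q : Ω × Ω' => A q.1 + B q.2) (fun q => ρ q.1 * ρ' q.2) := by
  funext s
  rw [addDist, sum_pmap_mul A ρ (fun x => pmap B ρ' (s - x)), pmap, Fintype.sum_prod_type]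
  refine Finset.sum_congr rfl fun ω _ => ?_
  rw [pmap, Finset.mul_sum]
  refine Finset.sum_congr rfl fun ω' _ => ?_
  simp only [eq_sub_iff_add_eq, add_comm (B ω'), mul_ite, mul_zero]

lemma condRdist_pmap_eq {μ : Ω → ℝ} (hμ : ∀ ω, 0 ≤ μ ω) (A B : Ω → G) (Z : Ω → γ) :
    condRdist (pmap (fun ω => ((A ω, B ω), Z ω)) μ)
      = condEnt (pmap (fun q => (A q.1 + B q.2, Z q.1)) (condIndepCopies μ Z))
        - (condEnt (pmap (fun ω => (A ω, Z ω)) μ)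
          + condEnt (pmap (fun ω => (B ω, Z ω)) μ)) / 2 := by
  rw [condEnt_pmap_eq_sum, condEnt_pmap_eq_sum, condEnt_pmap_eq_sum,
    pmap_comp_fst_condIndepCopies hμ]
  simp only [condRdist, rdist, margSnd_pmap, condDist_pmap, pmap_pmap, addDist_pmap,
    condOn_condIndepCopies hμ]
  rw [← Finset.sum_add_distrib, Finset.sum_div, ← Finset.sum_sub_distrib]
  refine Finset.sum_congr rfl fun z _ => ?_
  ring

end RuzsaDistance

section BSG

variable {Ω G γ : Type*} [Fintype Ω] [AddCommGroup G]

lemma add_eq_add_of_add_eq_add (hG : ∀ x : G, x + x = 0) {a b a' b' : G}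
    (h : a + b = a' + b') : a' + b = a + b' :=
  calc a' + b = a' + b + ((a + b) + (a' + b')) := by rw [h, hG, add_zero]
    _ = a + b' + (a' + a') + (b + b) := by abel
    _ = a + b' := by rw [hG, hG, add_zero, add_zero]

lemma condEnt_add_ent_condIndepCopies_le [Fintype G] [Fintype γ] (hG : ∀ x : G, x + x = 0)
    {P : (G × G) × γ → ℝ} (hP : ∀ p, 0 ≤ P p) :
    condEnt (pmap (fun q => (q.1.1.1 + q.2.1.2, (q.1.1.1 + q.1.1.2, q.1.2)))
        (condIndepCopies P fun p => (p.1.1 + p.1.2, p.2)))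
      + ent (condIndepCopies P fun p => (p.1.1 + p.1.2, p.2))
      ≤ 2 * ent (pmap (fun p => (p.1.1, p.2)) P) + 2 * ent (pmap (fun p => (p.1.2, p.2)) P)
        - 3 * ent (pmap Prod.snd P) := by
  set Z : (G × G) × γ → G × γ := fun p => (p.1.1 + p.1.2, p.2)
  set ν := condIndepCopies P Z
  have hν := condIndepCopies_nonneg hP Z
  have hsupp : ∀ q, ν q ≠ 0 → Z q.1 = Z q.2 := fun q hq => by
    by_contra h
    exact hq (condIndepCopies_eq_zero Z h)
  -- `X q = (A₁, B₂, C₁)`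
  let X : ((G × G) × γ) × ((G × G) × γ) → (G × G) × γ := fun q => ((q.1.1.1, q.2.1.2), q.1.2)
  have hcond : condEnt (pmap (fun q => (q.1.1.1 + q.2.1.2, Z q.1)) ν)
      ≤ ent (pmap (fun q => Z (X q)) ν) - ent (pmap Prod.snd P) := by
    refine (condEnt_pmap_le_comp hν (fun q => q.1.1.1 + q.2.1.2) (fun q => Z q.1)
      Prod.snd).trans_eq ?_
    rw [condEnt_pmap hν, pmap_comp_fst_condIndepCopies hP Z Prod.snd]
  have hcopies : ent (pmap (fun q => Z (X q)) ν) + ent ν ≤ 2 * ent (pmap X ν) := by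
    -- `Z (X q) = Z (X q.swap)` on the support of `ν`: this is where characteristic 2 enters.
    have h := ent_pair_add_ent_comp_le hν X (fun q => X q.swap) Z Z fun q hq => by
      have := hsupp q hq
      simp only [Z, X, Prod.mk.injEq, Prod.fst_swap, Prod.snd_swap] at this ⊢
      exact ⟨(add_eq_add_of_add_eq_add hG this.1).symm, this.2⟩
    rw [ent_pmap_of_injective (by rintro ⟨⟨⟨a, b⟩, c⟩, ⟨a', b'⟩, c'⟩ _ h; simp_all [X]),
      pmap_comp_swap_condIndepCopies Z X] at h
    linarith
  have hX : ent (pmap X ν) ≤ ent (pmap (fun p => (p.1.1, p.2)) P)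
      + ent (pmap (fun p => (p.1.2, p.2)) P) - ent (pmap Prod.snd P) := by
    have h := ent_triple_add_ent_le hν (fun q => q.1.1.1) (fun q => q.2.1.2) (fun q => q.1.2)
    rw [pmap_congr (h := fun q => (q.2.1.2, q.1.2)) (h' := fun q => (q.2.1.2, q.2.2))
      fun q hq => Prod.ext rfl (congrArg Prod.snd (hsupp q hq) :)] at h
    rw [pmap_comp_fst_condIndepCopies hP Z (fun p => (p.1.1, p.2)),
      pmap_comp_snd_condIndepCopies hP Z (fun p => (p.1.2, p.2)),
      pmap_comp_fst_condIndepCopies hP Z Prod.snd] at h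
    linarith
  linarith

lemma condRdist_prod_le [Fintype G] [Fintype γ] (hG : ∀ x : G, x + x = 0) {P : (G × G) × γ → ℝ}
    (hP : ∀ p, 0 ≤ P p) :
    condRdist (pmap (fun p => ((p.1.1, p.1.2), (p.1.1 + p.1.2, p.2))) P)
      ≤ 2 * ent (pmap (fun p => (p.1.1, p.2)) P) + 2 * ent (pmap (fun p => (p.1.2, p.2)) P)
        - 3 * ent (pmap Prod.snd P) - 3 * ent P
        + 2 * ent (pmap (fun p => (p.1.1 + p.1.2, p.2)) P) := by
  have hA : condEnt (pmap (fun p => (p.1.1, (p.1.1 + p.1.2, p.2))) P)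
      = ent P - ent (pmap (fun p => (p.1.1 + p.1.2, p.2)) P) := by
    rw [condEnt_pmap hP, ent_pmap_of_injective]
    rintro ⟨⟨a, b⟩, c⟩ ⟨⟨a', b'⟩, c'⟩ h
    obtain ⟨rfl, hab, rfl⟩ : a = a' ∧ a + b = a' + b' ∧ c = c' := by simpa using h
    rw [add_left_cancel hab]
  have hB : condEnt (pmap (fun p => (p.1.2, (p.1.1 + p.1.2, p.2))) P)
      = ent P - ent (pmap (fun p => (p.1.1 + p.1.2, p.2)) P) := by
    rw [condEnt_pmap hP, ent_pmap_of_injective]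
    rintro ⟨⟨a, b⟩, c⟩ ⟨⟨a', b'⟩, c'⟩ h
    obtain ⟨rfl, hab, rfl⟩ : b = b' ∧ a + b = a' + b' ∧ c = c' := by simpa using h
    rw [add_right_cancel hab]
  rw [condRdist_pmap_eq hP (fun p => p.1.1) (fun p => p.1.2), hA, hB]
  linarith [ent_condIndepCopies hP fun p => (p.1.1 + p.1.2, p.2),
    condEnt_add_ent_condIndepCopies_le hG hP]

theorem condRdist_pmap_le [Fintype G] [Fintype γ] (hG : ∀ x : G, x + x = 0) {μ : Ω → ℝ}
    (hμ : ∀ ω, 0 ≤ μ ω) (A B : Ω → G) (C : Ω → γ) :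
    condRdist (pmap (fun ω => ((A ω, B ω), (A ω + B ω, C ω))) μ)
      ≤ 3 * condMutInfo (pmap (fun ω => ((A ω, B ω), C ω)) μ)
        + 2 * ent (pmap (fun ω => (A ω + B ω, C ω)) μ)
        - ent (pmap (fun ω => (A ω, C ω)) μ) - ent (pmap (fun ω => (B ω, C ω)) μ) := by
  have h := condRdist_prod_le hG (pmap_nonneg hμ fun ω => ((A ω, B ω), C ω))
  simp only [pmap_pmap] at h
  rw [condMutInfo_pmap hμ]
  linarith

end BSG

section Quad

variable {n : ℕ}

lemma F2.add_self (x : F2 n) : x + x = 0 :=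
  funext fun i => CharTwo.add_self_eq_zero (x i)

lemma Tv_add_Vv (q : Quad n) : Tv q + Vv q = Wv q + Sv q := by
  funext i
  simp only [Tv, Vv, Wv, Sv, Pi.add_apply]
  ring_nf
  reduce_mod_char

lemma Vv_add_Wv (q : Quad n) : Vv q + Wv q = Tv q + Sv q := by
  funext i
  simp only [Tv, Vv, Wv, Sv, Pi.add_apply]
  ring_nf
  reduce_mod_char

lemma Wv_add_Tv (q : Quad n) : Wv q + Tv q = Vv q + Sv q := by
  funext i
  simp only [Tv, Vv, Wv, Sv, Pi.add_apply]
  ring_nf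
  reduce_mod_char

lemma Wb_eq (q : Quad n) : Wb q = Wv q + Sv q := by
  funext i
  simp only [Wb, Wv, Sv, Pi.add_apply]
  ring_nf
  reduce_mod_char

lemma Tb_eq (q : Quad n) : Tb q = Tv q + Sv q := by
  funext i
  simp only [Tb, Tv, Sv, Pi.add_apply]
  ring_nf
  reduce_mod_char

lemma Vb_eq (q : Quad n) : Vb q = Vv q + Sv q := by
  funext i
  simp only [Vb, Vv, Sv, Pi.add_apply]
  ring_nf
  reduce_mod_char

lemma jointXY_nonneg {f g : F2 n → ℝ} (hf : ∀ x, 0 ≤ f x) (hg : ∀ x, 0 ≤ g x) (q : Quad n) :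
    0 ≤ jointXY f g q :=
  mul_nonneg (mul_nonneg (mul_nonneg (hf _) (hf _)) (hg _)) (hg _)

lemma pmap_jointXY_Vv_Wv (f g : F2 n → ℝ) :
    pmap (fun q => ((Vv q, Wv q), Sv q)) (jointXY f g)
      = pmap (fun q => ((Tv q, Wv q), Sv q)) (jointXY f g) := by
  let swapY : Quad n ≃ Quad n := (Equiv.refl _).prodCongr (Equiv.prodComm _ _)
  have h := pmap_comp_equiv (μ := jointXY f g) swapY (fun q => by
      simp only [swapY, Equiv.prodCongr_apply, Prod.map, Equiv.refl_apply, Equiv.prodComm_apply,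
        jointXY, Prod.fst_swap, Prod.snd_swap]
      ring)
    (fun q => ((Tv q, Wv q), Sv q))
  rw [← h]
  congr
  funext q
  simp only [swapY, Tv, Vv, Wv, Sv, Equiv.prodCongr_apply, Equiv.coe_refl, Equiv.coe_prodComm,
    Prod.map, id, Prod.fst_swap, Prod.snd_swap, add_right_comm _ q.2.2]

end Quad

/-- endgame inequality:
`d[(T;V) | (W̄,S)] + d[(V;W) | (T̄,S)] + d[(W;T) | (V̄,S)] ≤ 3·I₁ + 6·I₂`. -/
theorem stmt_5 (n : ℕ) (f g : F2 n → ℝ) (hf : IsDist f) (hg : IsDist g) :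
    condRdist (pmap (fun q : Quad n => ((Tv q, Vv q), (Wb q, Sv q))) (jointXY f g))
    + condRdist (pmap (fun q : Quad n => ((Vv q, Wv q), (Tb q, Sv q))) (jointXY f g))
    + condRdist (pmap (fun q : Quad n => ((Wv q, Tv q), (Vb q, Sv q))) (jointXY f g))
      ≤ 3 * I1 f g + 6 * I2 f g := by
  have hμ := jointXY_nonneg hf.1 hg.1
  have hTV := condRdist_pmap_le F2.add_self hμ Tv Vv Sv
  have hVW := condRdist_pmap_le F2.add_self hμ Vv Wv Sv
  have hWT := condRdist_pmap_le F2.add_self hμ Wv Tv Sv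
  rw [pmap_jointXY_Vv_Wv] at hVW
  rw [condMutInfo_pmap_comm hμ Wv] at hWT
  simp only [Tv_add_Vv, Vv_add_Wv, Wv_add_Tv, ent_pmap_add_pair] at hTV hVW hWT
  simp only [Wb_eq, Tb_eq, Vb_eq, I1, I2]
  linarith

end
end

section
/- Fix a nonempty finite set A ⊆ 𝔽₂ⁿ and a linear subspace V ⊆ 𝔽₂ⁿ. If τ⁺(U_V) + τ⁻(U_V) ≤ r for some real r ≥ 0, then there exists t ∈ 𝔽₂ⁿ such that |A ∩ (V+t)| ≥ 2^{−r}·max(|A|, |V|). -/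
open scoped BigOperators Pointwise Classical

noncomputable section

/-! Let `M` be the largest size of a translate `A ∩ (V + t)`. For every `T`, the law of `U_A + T`
gives `V` mass at most `M / |A|`, so by Jensen `D_KL(U_V ‖ U_A + T) ≥ log (|A| / M)`. Hence
`τ⁻(U_V) ≥ log (|A| / M)` and `τ⁺(U_V) ≥ log (|V| / M)`, and the hypothesis gives
`|A| |V| ≤ 2^r M²`. As `M ≤ min (|A|, |V|)`, this forces `M ≥ 2^{-r} max (|A|, |V|)`. -/

open Finset

section Distributions

variable {α : Type*}

lemma neg_logb_sum_le_sum_inv_card_mul_logb {S : Finset α} (hS : S.Nonempty) {g : α → ℝ}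
    (hg : ∀ x ∈ S, 0 < g x) :
    -Real.logb 2 (∑ x ∈ S, g x) ≤ ∑ x ∈ S, (#S : ℝ)⁻¹ * Real.logb 2 ((#S : ℝ)⁻¹ / g x) := by
  have hN : (0 : ℝ) < #S := by exact_mod_cast hS.card_pos
  have jensen := strictConcaveOn_log_Ioi.concaveOn.le_map_sum (t := S)
    (w := fun _ => (#S : ℝ)⁻¹) (p := fun x => #S * g x) (fun _ _ => by positivity)
    (by simp [hN.ne']) (fun x hx => Set.mem_Ioi.2 (by have := hg x hx; positivity))
  have hsum : ∑ x ∈ S, (#S : ℝ)⁻¹ • ((#S : ℝ) * g x) = ∑ x ∈ S, g x :=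
    sum_congr rfl fun x _ => by simp [hN.ne']
  rw [hsum] at jensen
  have hterm : ∀ x ∈ S, (#S : ℝ)⁻¹ * Real.logb 2 ((#S : ℝ)⁻¹ / g x)
      = -((#S : ℝ)⁻¹ • Real.log (#S * g x)) / Real.log 2 := by
    intro x hx
    rw [Real.logb, inv_div_left, Real.log_inv, smul_eq_mul, mul_comm (g x)]
    ring
  rw [sum_congr rfl hterm, ← sum_div, sum_neg_distrib, Real.logb, ← neg_div]
  gcongr

variable [Fintype α]

lemma unifSet_eq_unifFin (S : Set α) : unifSet S = unifFin S.toFinset := by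
  funext x
  simp [unifSet, unifFin]

lemma sum_unifFin_mul (S : Finset α) (φ : α → ℝ) :
    ∑ x, unifFin S x * φ x = ∑ x ∈ S, (#S : ℝ)⁻¹ * φ x := by
  simp only [unifFin, ite_mul, zero_mul, sum_ite_mem, univ_inter]

lemma ent_unifFin {S : Finset α} (hS : S.Nonempty) : ent (unifFin S) = Real.logb 2 #S := by
  have hN : (#S : ℝ) ≠ 0 := by exact_mod_cast hS.card_pos.ne'
  simp only [ent, sum_neg_distrib, sum_unifFin_mul]
  rw [sum_congr rfl fun x hx => by rw [unifFin, if_pos hx], sum_const, nsmul_eq_mul,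
    Real.logb_inv]
  field_simp

lemma logb_inv_le_KL_unifFin {S : Finset α} (hS : S.Nonempty) {g : α → ℝ} (hg : ∀ x, 0 ≤ g x)
    {s : ℝ} (hgs : ∑ x ∈ S, g x ≤ s) :
    ((Real.logb 2 s⁻¹ : ℝ) : EReal) ≤ KL (unifFin S) g := by
  rw [KL]
  split_ifs with hsupp
  · have hpos : ∀ x ∈ S, 0 < g x := fun x hx => (hg x).lt_of_ne fun h0 =>
      (inv_pos.2 (by exact_mod_cast hS.card_pos : (0 : ℝ) < #S)).ne' (by
        simpa [unifFin, hx] using hsupp x h0.symm)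
    rw [EReal.coe_le_coe_iff, Real.logb_inv, sum_unifFin_mul]
    calc -Real.logb 2 s ≤ -Real.logb 2 (∑ x ∈ S, g x) :=
          neg_le_neg (Real.logb_le_logb_of_le one_lt_two (sum_pos hpos hS) hgs)
      _ ≤ ∑ x ∈ S, (#S : ℝ)⁻¹ * Real.logb 2 ((#S : ℝ)⁻¹ / g x) :=
          neg_logb_sum_le_sum_inv_card_mul_logb hS hpos
      _ = _ := sum_congr rfl fun x hx => by rw [unifFin, if_pos hx]
  · exact le_top

lemma sum_unifFin_filter (A : Finset α) (p : α → Prop) [DecidablePred p] :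
    ∑ a with p a, unifFin A a = #{a ∈ A | p a} / #A := by
  simp [unifFin, sum_ite_mem, div_eq_mul_inv, filter_inter]

variable [AddGroup α] [DecidableEq α]

lemma sum_addDist_eq (f t : α → ℝ) (S : Finset α) :
    ∑ x ∈ S, addDist f t x = ∑ y, t y * ∑ a with y + a ∈ S, f a := by
  calc ∑ x ∈ S, addDist f t x = ∑ a, ∑ x ∈ S, f a * t (x - a) := by
        simp only [addDist]; exact sum_comm
    _ = ∑ a, ∑ y with y + a ∈ S, f a * t y := by
        refine sum_congr rfl fun a _ => sum_equiv (Equiv.subRight a) (by simp) (by simp)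
    _ = ∑ y, t y * ∑ a with y + a ∈ S, f a := by
        simp only [sum_filter, mul_sum]
        rw [sum_comm]
        exact sum_congr rfl fun y _ => sum_congr rfl fun a _ => by split_ifs <;> ring

lemma sum_addDist_unifFin_le {A S : Finset α} {t : α → ℝ} (ht : IsDist t) {M : ℕ}
    (hM : ∀ y, #{a ∈ A | y + a ∈ S} ≤ M) :
    ∑ x ∈ S, addDist (unifFin A) t x ≤ M / #A := by
  rw [sum_addDist_eq]
  calc ∑ y, t y * ∑ a with y + a ∈ S, unifFin A a
      = ∑ y, t y * (#{a ∈ A | y + a ∈ S} / #A) := by simp only [sum_unifFin_filter]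
    _ ≤ ∑ y, t y * (M / #A) := by
        gcongr with y
        · exact ht.1 y
        · exact hM y
    _ = M / #A := by rw [← sum_mul, ht.2, one_mul]

end Distributions

section Tau

variable {n : ℕ} {A S : Finset (F2 n)}

lemma logb_card_div_le_tauMinus (hS : S.Nonempty) {M : ℕ}
    (hM : ∀ y, #{a ∈ A | y + a ∈ S} ≤ M) :
    ((Real.logb 2 (#A / M) : ℝ) : EReal) ≤ tauMinus A (unifFin S) := by
  unfold tauMinus
  refine le_iInf fun t => ?_
  have hadd : ∀ x, 0 ≤ addDist (unifFin A) t.1 x := fun x =>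
    sum_nonneg fun a _ => mul_nonneg (by unfold unifFin; positivity) (t.2.1 _)
  have := logb_inv_le_KL_unifFin hS hadd (sum_addDist_unifFin_le t.2 hM)
  rwa [inv_div] at this

lemma logb_le_tauPlus_add_tauMinus (hA : A.Nonempty) (hS : S.Nonempty) {M : ℕ} (hM0 : 0 < M)
    (hM : ∀ y, #{a ∈ A | y + a ∈ S} ≤ M) :
    ((Real.logb 2 (#A * #S / M ^ 2) : ℝ) : EReal)
      ≤ tauPlus A (unifFin S) + tauMinus A (unifFin S) := by
  have hτ := logb_card_div_le_tauMinus hS hM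
  have hA' : (#A : ℝ) ≠ 0 := by exact_mod_cast hA.card_pos.ne'
  have hS' : (#S : ℝ) ≠ 0 := by exact_mod_cast hS.card_pos.ne'
  have hM' : (M : ℝ) ≠ 0 := by exact_mod_cast hM0.ne'
  have hsplit : Real.logb 2 (#A * #S / M ^ 2)
      = Real.logb 2 (#A / M) + (Real.logb 2 #S - Real.logb 2 #A) + Real.logb 2 (#A / M) := by
    simp only [Real.logb_div, Real.logb_mul, Real.logb_pow, hA', hS', hM', pow_ne_zero,
      mul_ne_zero_iff, ne_eq, not_false_eq_true, and_self]
    push_cast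
    ring
  rw [hsplit, tauPlus, ent_unifFin hS, ent_unifFin hA, EReal.coe_add, EReal.coe_add]
  gcongr

end Tau

lemma rpow_neg_mul_max_le_of_logb_le {a v m r : ℝ} (hm : 0 < m) (hma : m ≤ a) (hmv : m ≤ v)
    (h : Real.logb 2 (a * v / m ^ 2) ≤ r) : 2 ^ (-r) * max a v ≤ m := by
  have hav : a * v ≤ 2 ^ r * m ^ 2 := by
    have : 0 < a * v / m ^ 2 := by have := hm.trans_le hma; have := hm.trans_le hmv; positivity
    rwa [Real.logb_le_iff_le_rpow one_lt_two this, div_le_iff₀ (by positivity)] at h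
  have hmax : max a v * m ≤ a * v := by
    rcases le_total a v with h | h
    · rw [max_eq_right h]; nlinarith
    · rw [max_eq_left h]; nlinarith
  rw [Real.rpow_neg zero_le_two, inv_mul_le_iff₀ (by positivity)]
  nlinarith

section Translates

variable {G : Type*} [AddGroup G] [DecidableEq G]

lemma card_filter_add_mem_le (A S : Finset G) (y : G) : #{a ∈ A | y + a ∈ S} ≤ #S :=
  card_le_card_of_injOn (y + ·) (fun _ ha => (mem_filter.1 ha).2) fun _ _ _ _ => add_left_cancel

lemma natCard_inter_neg_vadd (A S : Finset G) (y : G) :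
    Nat.card ↥((A : Set G) ∩ (-y +ᵥ (S : Set G))) = #{a ∈ A | y + a ∈ S} := by
  rw [← Set.ncard_coe_finset, ← Nat.card_coe_set_eq]
  congr! 2
  ext a
  simp [Set.mem_vadd_set_iff_neg_vadd_mem]

end Translates

theorem stmt_14_general (n : ℕ) (A : Finset (F2 n)) (hA : A.Nonempty)
    (V : Submodule (ZMod 2) (F2 n)) (r : ℝ)
    (h : tauPlus A (unifSet (V : Set (F2 n))) + tauMinus A (unifSet (V : Set (F2 n)))
        ≤ (r : EReal)) :
    ∃ t : F2 n, (2 : ℝ) ^ (-r) * (max A.card (Nat.card V) : ℝ)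
      ≤ (Nat.card ↥((A : Set (F2 n)) ∩ (t +ᵥ (V : Set (F2 n)))) : ℝ) := by
  set S := (V : Set (F2 n)).toFinset with hS
  have h0 : (0 : F2 n) ∈ S := by simp [hS]
  obtain ⟨y, -, hy⟩ := exists_max_image univ (fun y => #{a ∈ A | y + a ∈ S}) univ_nonempty
  obtain ⟨a, ha⟩ := hA
  have hM0 : 0 < #{a ∈ A | y + a ∈ S} :=
    (card_pos.2 ⟨a, by simp [ha, h0]⟩).trans_le (hy (-a) (mem_univ _))
  have hτ := logb_le_tauPlus_add_tauMinus ⟨a, ha⟩ ⟨0, h0⟩ hM0 fun y' => hy y' (mem_univ _)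
  rw [← unifSet_eq_unifFin] at hτ
  refine ⟨-y, ?_⟩
  rw [← Set.coe_toFinset (V : Set (F2 n)), natCard_inter_neg_vadd,
    show Nat.card V = #S from Nat.card_eq_card_toFinset _]
  exact rpow_neg_mul_max_le_of_logb_le (by exact_mod_cast hM0)
    (by exact_mod_cast card_filter_le _ _) (by exact_mod_cast card_filter_add_mem_le _ _ _)
    (EReal.coe_le_coe_iff.1 (hτ.trans h))

/-- if `τ⁺(U_V) + τ⁻(U_V) ≤ r` for some real `r ≥ 0`, then there exists
`t` with `|A ∩ (V+t)| ≥ 2^{−r}·max(|A|, |V|)`. -/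
theorem stmt_14 (n : ℕ) (A : Finset (F2 n)) (hA : A.Nonempty)
    (V : Submodule (ZMod 2) (F2 n)) (r : ℝ) (hr : 0 ≤ r)
    (h : tauPlus A (unifSet (V : Set (F2 n))) + tauMinus A (unifSet (V : Set (F2 n)))
        ≤ (r : EReal)) :
    ∃ t : F2 n, (2 : ℝ) ^ (-r) * (max A.card (Nat.card V) : ℝ)
      ≤ (Nat.card ↥((A : Set (F2 n)) ∩ (t +ᵥ (V : Set (F2 n)))) : ℝ) :=
  stmt_14_general n A hA V r h

end
end

section
/- Fix a nonempty finite set A ⊆ 𝔽₂ⁿ. For any independent 𝔽₂ⁿ-valued random variables X, Y: τ⁻(X+Y) ≤ τ⁻(X). -/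
open scoped BigOperators Pointwise Classical

noncomputable section

/-
Adding an independent `Y` applies a Markov kernel, and KL divergence cannot increase under a Markov
kernel (data processing, a consequence of the log-sum inequality). So for any `T`,
`D(X + Y ‖ (U_A + T) + Y) ≤ D(X ‖ U_A + T)`, and `(U_A + T) + Y = U_A + (T + Y)` is again of
the form `U_A + T'`.
-/

lemma convexOn_mul_logb {b : ℝ} (hb : 1 ≤ b) :
    ConvexOn ℝ (Set.Ici 0) (fun x : ℝ => x * Real.logb b x) := by
  refine (Real.convexOn_mul_log.smul (inv_nonneg.2 (Real.log_nonneg hb))).congr fun x _ => ?_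
  simp only [Real.logb, smul_eq_mul]
  ring

lemma logb_sum_inequality {ι : Type*} [Fintype ι] {b : ℝ} (hb : 1 ≤ b) (p q : ι → ℝ)
    (hp : ∀ i, 0 ≤ p i) (hq : ∀ i, 0 ≤ q i) (hpq : ∀ i, q i = 0 → p i = 0) :
    (∑ i, p i) * Real.logb b ((∑ i, p i) / ∑ i, q i) ≤ ∑ i, p i * Real.logb b (p i / q i) := by
  rcases (Finset.sum_nonneg fun i _ => hq i).eq_or_lt with hQ | hQ
  · have hq0 : ∀ i, q i = 0 := fun i =>
      (Finset.sum_eq_zero_iff_of_nonneg fun i _ => hq i).1 hQ.symm i (Finset.mem_univ i)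
    simp [fun i => hpq i (hq0 i)]
  · -- Jensen for `x ↦ x logb x` at the points `p i / q i` with weights `q i`.
    have hJensen := (convexOn_mul_logb hb).map_centerMass_le (t := Finset.univ)
      (fun i _ => hq i) hQ (fun i _ => Set.mem_Ici.2 (div_nonneg (hp i) (hq i)))
    simp only [Finset.centerMass, smul_eq_mul, Function.comp_apply, ← mul_assoc,
      mul_div_cancel_of_imp' (hpq _)] at hJensen
    rwa [← div_eq_inv_mul, ← div_eq_inv_mul, div_mul_eq_mul_div,
      div_le_div_iff_of_pos_right hQ] at hJensen

section DataProcessing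

variable {α β : Type*} [Fintype α] [Fintype β]

lemma KL_bind_le (f k : α → ℝ) (K : α → β → ℝ) (hf : ∀ x, 0 ≤ f x) (hk : ∀ x, 0 ≤ k x)
    (hK : ∀ x s, 0 ≤ K x s) (hK_sum : ∀ x, ∑ s, K x s = 1) :
    KL (fun s => ∑ x, f x * K x s) (fun s => ∑ x, k x * K x s) ≤ KL f k := by
  by_cases hsupp : ∀ x, k x = 0 → f x = 0
  swap
  · unfold KL
    rw [if_neg hsupp]
    exact le_top
  have hsupp_joint : ∀ x s, k x * K x s = 0 → f x * K x s = 0 := fun x s h => by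
    rcases mul_eq_zero.1 h with h | h <;> simp [h, hsupp x]
  have hsupp_bind : ∀ s, ∑ x, k x * K x s = 0 → ∑ x, f x * K x s = 0 := fun s hs =>
    Finset.sum_eq_zero fun x _ => hsupp_joint x s <|
      (Finset.sum_eq_zero_iff_of_nonneg fun x _ => mul_nonneg (hk x) (hK x s)).1 hs x
        (Finset.mem_univ x)
  rw [KL, KL, if_pos hsupp_bind, if_pos hsupp, EReal.coe_le_coe_iff]
  calc ∑ s, (∑ x, f x * K x s) * Real.logb 2 ((∑ x, f x * K x s) / ∑ x, k x * K x s)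
      ≤ ∑ s, ∑ x, f x * K x s * Real.logb 2 (f x * K x s / (k x * K x s)) :=
        Finset.sum_le_sum fun s _ => logb_sum_inequality one_le_two _ _
          (fun x => mul_nonneg (hf x) (hK x s)) (fun x => mul_nonneg (hk x) (hK x s))
          (fun x => hsupp_joint x s)
    _ = ∑ x, ∑ s, f x * Real.logb 2 (f x / k x) * K x s := by
        rw [Finset.sum_comm]
        refine Fintype.sum_congr _ _ fun x => Fintype.sum_congr _ _ fun s => ?_
        rcases eq_or_ne (K x s) 0 with h | h
        · simp [h]
        · rw [mul_div_mul_right _ _ h]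
          ring
    _ = ∑ x, f x * Real.logb 2 (f x / k x) := by
        simp only [← Finset.mul_sum, hK_sum, mul_one]

end DataProcessing

section Convolution

variable {α : Type*} [Fintype α] [AddGroup α]

lemma sum_comp_sub_right (g : α → ℝ) (x : α) : ∑ s, g (s - x) = ∑ s, g s :=
  Fintype.sum_equiv (Equiv.subRight x) _ _ fun _ => rfl

lemma addDist_nonneg {f g : α → ℝ} (hf : ∀ x, 0 ≤ f x) (hg : ∀ x, 0 ≤ g x) (s : α) :
    0 ≤ addDist f g s :=
  Finset.sum_nonneg fun x _ => mul_nonneg (hf x) (hg _)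

lemma IsDist.addDist {f g : α → ℝ} (hf : IsDist f) (hg : IsDist g) : IsDist (addDist f g) := by
  refine ⟨addDist_nonneg hf.1 hg.1, ?_⟩
  simp only [_root_.addDist]
  rw [Finset.sum_comm]
  simp only [← Finset.mul_sum, sum_comp_sub_right, hg.2, mul_one, hf.2]

lemma addDist_assoc (f g h : α → ℝ) :
    addDist (addDist f g) h = addDist f (addDist g h) := by
  funext s
  simp only [addDist, Finset.sum_mul, Finset.mul_sum]
  rw [Finset.sum_comm]
  refine Fintype.sum_congr _ _ fun x => Fintype.sum_equiv (Equiv.subRight x) _ _ fun y => ?_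
  rw [Equiv.subRight_apply, sub_sub_sub_cancel_right, mul_assoc]

lemma KL_addDist_le (f k g : α → ℝ) (hf : ∀ x, 0 ≤ f x) (hk : ∀ x, 0 ≤ k x) (hg : IsDist g) :
    KL (addDist f g) (addDist k g) ≤ KL f k :=
  KL_bind_le f k (fun x s => g (s - x)) hf hk (fun _ _ => hg.1 _)
    fun x => (sum_comp_sub_right g x).trans hg.2

end Convolution

lemma unifFin_nonneg {α : Type*} [Fintype α] (A : Finset α) (x : α) : 0 ≤ unifFin A x := by
  unfold unifFin
  positivity

theorem stmt_15_general (n : ℕ) (A : Finset (F2 n))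
    (f g : F2 n → ℝ) (hf : IsDist f) (hg : IsDist g) :
    tauMinus A (addDist f g) ≤ tauMinus A f := by
  refine le_iInf fun t => ?_
  calc tauMinus A (addDist f g)
      ≤ KL (addDist f g) (addDist (unifFin A) (addDist t.1 g)) :=
        iInf_le_of_le ⟨addDist t.1 g, t.2.addDist hg⟩ le_rfl
    _ = KL (addDist f g) (addDist (addDist (unifFin A) t.1) g) := by rw [addDist_assoc]
    _ ≤ KL f (addDist (unifFin A) t.1) :=
        KL_addDist_le _ _ _ hf.1 (addDist_nonneg (unifFin_nonneg A) t.2.1) hg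

/-- for independent `X ∼ f`, `Y ∼ g` on `𝔽₂ⁿ`, `τ⁻(X+Y) ≤ τ⁻(X)`. -/
theorem stmt_15 (n : ℕ) (A : Finset (F2 n)) (hA : A.Nonempty)
    (f g : F2 n → ℝ) (hf : IsDist f) (hg : IsDist g) :
    tauMinus A (addDist f g) ≤ tauMinus A f :=
  stmt_15_general n A f g hf hg
end
end
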